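/- arXiv:2102.00254 — 4 statements merged into one kernel-verified Lean document; each statement's English description precedes it below -/
import Mathlib

section
/- Let B ⊂ ℝ^m be compact and Ω of finite measure. Every extreme point of the set of Young measures Y(Ω;B) is composed of Dirac measures: if ν ∈ Y(Ω;B) is extreme, then there exists a measurable u : Ω → B such that ν_x = δ_{u(x)} for a.e. x ∈ Ω. Conversely, every such Dirac-type Young measure is an extreme point of Y(Ω;B). -/
/-!
If `ν` is extreme and `f ∈ C(B)`, the two perturbations `(1 ± ε (f - ∫ f dν_x)) ν_x` are again
Young measures (for `ε` small) whose midpoint is `ν`, so they agree for a.e. `x`; comparing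
densities, `f` equals its mean `ν_x`-a.e. Applied to the coordinate functions, this concentrates
`ν_x` at its barycenter, which is therefore a.e. a point of `B`. Conversely, if `δ_a` is the midpoint
of two probability measures, both are absolutely continuous with respect to `δ_a`, hence equal to it.
-/

open MeasureTheory
open scoped BoundedContinuousFunction

/-- Young measures: weakly* measurable families of probability measures on compact `B ⊂ ℝ^m`. -/
def IsYoungMeasure {α : Type*} [MeasurableSpace α] (μ : Measure α)
    {m : ℕ} (B : Set (Fin m → ℝ)) (ν : α → Measure B) : Prop :=
  (∀ g : B →ᵇ ℝ, Measurable fun x => ∫ z, g z ∂(ν x)) ∧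
    ∀ᵐ x ∂μ, IsProbabilityMeasure (ν x)

/-- `ν` is an extreme point of the convex set `Y(Ω;B)` of Young measures: whenever
`ν = ½ ν₁ + ½ ν₂` (a.e. in `x`) with `ν₁, ν₂ ∈ Y(Ω;B)`, necessarily `ν₁ = ν₂` a.e. -/
def IsExtremeYoungMeasure {α : Type*} [MeasurableSpace α] (μ : Measure α)
    {m : ℕ} (B : Set (Fin m → ℝ)) (ν : α → Measure B) : Prop :=
  IsYoungMeasure μ B ν ∧
    ∀ ν₁ ν₂ : α → Measure B, IsYoungMeasure μ B ν₁ → IsYoungMeasure μ B ν₂ →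
      (∀ᵐ x ∂μ, ν x = (2⁻¹ : ENNReal) • ν₁ x + (2⁻¹ : ENNReal) • ν₂ x) →
      ∀ᵐ x ∂μ, ν₁ x = ν₂ x

open Measure
open scoped ENNReal

section Dirac

variable {X : Type*} [MeasurableSpace X] [MeasurableSingletonClass X] {p q : Measure X}
  [IsProbabilityMeasure p] {a : X}

lemma eq_dirac_iff_ae_eq : p = dirac a ↔ ∀ᵐ z ∂p, z = a := by
  refine ⟨fun h => h ▸ by simp, fun h => ?_⟩
  simpa using (ProbabilityTheory.hasLaw_dirac_of_ae_eq (X := id) h).map_eq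

lemma eq_dirac_of_dirac_eq_half_add (h : dirac a = (2⁻¹ : ℝ≥0∞) • p + (2⁻¹ : ℝ≥0∞) • q) :
    p = dirac a := by
  have hac : p ≪ dirac a := h ▸ (absolutelyContinuous_smul (by norm_num)).add_right _
  exact eq_dirac_iff_ae_eq.2 (hac.ae_le (by simp))

end Dirac

section Perturbation

variable {X : Type*} [TopologicalSpace X] [MeasurableSpace X] [OpensMeasurableSpace X]
  {p : Measure X} [IsProbabilityMeasure p] {f : X →ᵇ ℝ} {e : ℝ}

noncomputable def perturbation (p : Measure X) (f : X →ᵇ ℝ) (e : ℝ) : Measure X :=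
  p.withDensity fun z => ENNReal.ofReal (1 + e * (f z - ∫ y, f y ∂p))

lemma one_add_mul_sub_integral_nonneg (he : 2 * |e| * ‖f‖ ≤ 1) (z : X) :
    0 ≤ 1 + e * (f z - ∫ y, f y ∂p) := by
  have hm : |∫ y, f y ∂p| ≤ ‖f‖ := f.norm_integral_le_norm p
  have hz : |f z| ≤ ‖f‖ := f.norm_coe_le_norm z
  have : |e * (f z - ∫ y, f y ∂p)| ≤ 1 :=
    calc |e * (f z - ∫ y, f y ∂p)| = |e| * |f z - ∫ y, f y ∂p| := abs_mul _ _
      _ ≤ |e| * (‖f‖ + ‖f‖) := by gcongr; exact (abs_sub _ _).trans (add_le_add hz hm)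
      _ ≤ 1 := by linarith
  linarith [neg_abs_le (e * (f z - ∫ y, f y ∂p))]

lemma integral_perturbation (he : 2 * |e| * ‖f‖ ≤ 1) (g : X →ᵇ ℝ) :
    ∫ z, g z ∂perturbation p f e =
      ∫ z, g z ∂p + e * (∫ z, (f * g) z ∂p - (∫ z, f z ∂p) * ∫ z, g z ∂p) := by
  rw [perturbation, integral_withDensity_eq_integral_toReal_smul (by fun_prop)
    (ae_of_all _ fun _ => ENNReal.ofReal_lt_top)]
  set mf := ∫ z, f z ∂p
  have hfg : Integrable (fun z => e * (f * g) z) p := ((f * g).integrable p).const_mul e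
  have hg : Integrable (fun z => e * mf * g z) p := (g.integrable p).const_mul _
  have hgfg : Integrable (fun z => g z + e * (f * g) z) p := (g.integrable p).add hfg
  calc ∫ z, (ENNReal.ofReal (1 + e * (f z - mf))).toReal • g z ∂p
      = ∫ z, (g z + e * (f * g) z - e * mf * g z) ∂p := by
        congr with z
        rw [ENNReal.toReal_ofReal (one_add_mul_sub_integral_nonneg he z), smul_eq_mul,
          BoundedContinuousFunction.coe_mul, Pi.mul_apply]
        ring
    _ = _ := by
        rw [integral_sub hgfg hg, integral_add (g.integrable p) hfg,
          integral_const_mul, integral_const_mul]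
        ring

lemma isProbabilityMeasure_perturbation (he : 2 * |e| * ‖f‖ ≤ 1) :
    IsProbabilityMeasure (perturbation p f e) := by
  set mf := ∫ z, f z ∂p
  have hcentered : Integrable (fun z => e * (f z - mf)) p :=
    ((f.integrable p).sub (integrable_const mf)).const_mul e
  have hint : Integrable (fun z => 1 + e * (f z - mf)) p := (integrable_const 1).add hcentered
  constructor
  rw [perturbation, withDensity_apply _ .univ, restrict_univ,
    ← ofReal_integral_eq_lintegral_ofReal hint (ae_of_all _ (one_add_mul_sub_integral_nonneg he)),
    integral_add (integrable_const 1) hcentered,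
    integral_const_mul, integral_sub (f.integrable p) (integrable_const mf)]
  simp [mf]

lemma half_perturbation_add_half_perturbation_neg (he : 2 * |e| * ‖f‖ ≤ 1) :
    (2⁻¹ : ℝ≥0∞) • perturbation p f e + (2⁻¹ : ℝ≥0∞) • perturbation p f (-e) = p := by
  have he' : 2 * |-e| * ‖f‖ ≤ 1 := by rwa [abs_neg]
  rw [perturbation, perturbation, ← withDensity_smul _ (by fun_prop),
    ← withDensity_smul _ (by fun_prop), ← withDensity_add_right _ (by fun_prop)]
  conv_rhs => rw [← withDensity_one (μ := p)]
  congr with z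
  simp only [Pi.add_apply, Pi.smul_apply, Pi.one_apply, smul_eq_mul]
  rw [← mul_add, ← ENNReal.ofReal_add (one_add_mul_sub_integral_nonneg he z)
    (one_add_mul_sub_integral_nonneg he' z)]
  ring_nf
  simp [ENNReal.inv_mul_cancel]

lemma ae_eq_integral_of_perturbation_eq (he : 2 * |e| * ‖f‖ ≤ 1) (he₀ : e ≠ 0)
    (h : perturbation p f e = perturbation p f (-e)) : ∀ᵐ z ∂p, f z = ∫ y, f y ∂p := by
  have he' : 2 * |-e| * ‖f‖ ≤ 1 := by rwa [abs_neg]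
  rw [perturbation, perturbation, withDensity_eq_iff_of_sigmaFinite (by fun_prop) (by fun_prop)] at h
  filter_upwards [h] with z hz
  rw [ENNReal.ofReal_eq_ofReal_iff (one_add_mul_sub_integral_nonneg he z)
    (one_add_mul_sub_integral_nonneg he' z)] at hz
  have : e * (f z - ∫ y, f y ∂p) = 0 := by linarith
  simpa [he₀, sub_eq_zero] using this

end Perturbation

lemma exists_measurable_subtype_ae_eq {α E : Type*} [MeasurableSpace α] [MeasurableSpace E]
    {μ : Measure α} {B : Set E} (hB : MeasurableSet B) (hBne : B.Nonempty) {b : α → E}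
    (hb : Measurable b) (hbB : ∀ᵐ x ∂μ, b x ∈ B) :
    ∃ u : α → B, Measurable u ∧ ∀ᵐ x ∂μ, (u x : E) = b x := by
  classical
  have hmem (x : α) : (if b x ∈ B then b x else hBne.some) ∈ B := by
    split_ifs with h
    exacts [h, hBne.some_mem]
  refine ⟨fun x => ⟨_, hmem x⟩, (Measurable.ite (hb hB) hb measurable_const).subtype_mk, ?_⟩
  filter_upwards [hbB] with x hx
  simp [hx]

section YoungMeasure

variable {α : Type*} [MeasurableSpace α] {μ : Measure α} {m : ℕ} {B : Set (Fin m → ℝ)}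
  {ν ν' : α → Measure B}

/- Extremality only sees `ν` up to a null set, but measurability of `x ↦ ∫ g ∂ν x` is required at
every `x`; redefining `ν` on a measurable null set lets the perturbations be formed pointwise. -/
lemma IsYoungMeasure.exists_ae_eq_forall_isProbabilityMeasure (hν : IsYoungMeasure μ B ν)
    (hB : B.Nonempty) :
    ∃ ν', IsYoungMeasure μ B ν' ∧ (∀ x, IsProbabilityMeasure (ν' x)) ∧ ν =ᵐ[μ] ν' := by
  classical
  obtain ⟨b⟩ := hB.to_subtype
  set N := toMeasurable μ {x | ¬IsProbabilityMeasure (ν x)}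
  have hN : ∀ᵐ x ∂μ, x ∉ N := measure_eq_zero_iff_ae_notMem.1 <| by
    rw [measure_toMeasurable]; exact ae_iff.1 hν.2
  have hprob (x : α) : IsProbabilityMeasure (N.piecewise (fun _ => dirac b) ν x) := by
    by_cases hx : x ∈ N
    · rw [Set.piecewise_eq_of_mem _ _ _ hx]; infer_instance
    · rw [Set.piecewise_eq_of_notMem _ _ _ hx]
      by_contra h
      exact hx (subset_toMeasurable _ _ h)
  refine ⟨N.piecewise (fun _ => dirac b) ν, ⟨fun g => ?_, ae_of_all _ hprob⟩, hprob, ?_⟩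
  · have : (fun x => ∫ z, g z ∂N.piecewise (fun _ => dirac b) ν x) =
        N.piecewise (fun _ => g b) fun x => ∫ z, g z ∂ν x := by
      ext x
      by_cases hx : x ∈ N <;> simp [hx]
    rw [this]
    exact Measurable.piecewise (measurableSet_toMeasurable _ _) measurable_const (hν.1 g)
  · filter_upwards [hN] with x hx
    rw [Set.piecewise_eq_of_notMem _ _ _ hx]

lemma IsExtremeYoungMeasure.congr_ae (hν : IsExtremeYoungMeasure μ B ν)
    (hν' : IsYoungMeasure μ B ν') (h : ν =ᵐ[μ] ν') : IsExtremeYoungMeasure μ B ν' :=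
  ⟨hν', fun ν₁ ν₂ h₁ h₂ hmid =>
    hν.2 ν₁ ν₂ h₁ h₂ (by filter_upwards [h, hmid] with x hx hx' using hx.trans hx')⟩

lemma IsYoungMeasure.perturbation (hν : IsYoungMeasure μ B ν)
    (hprob : ∀ x, IsProbabilityMeasure (ν x)) {f : B →ᵇ ℝ} {e : ℝ} (he : 2 * |e| * ‖f‖ ≤ 1) :
    IsYoungMeasure μ B fun x => perturbation (ν x) f e := by
  refine ⟨fun g => ?_, ae_of_all _ fun x => isProbabilityMeasure_perturbation he⟩
  simp_rw [integral_perturbation he g]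
  exact (hν.1 g).add (measurable_const.mul ((hν.1 (f * g)).sub ((hν.1 f).mul (hν.1 g))))

lemma IsExtremeYoungMeasure.ae_ae_eq_integral (hν : IsExtremeYoungMeasure μ B ν)
    (hprob : ∀ x, IsProbabilityMeasure (ν x)) (f : B →ᵇ ℝ) :
    ∀ᵐ x ∂μ, ∀ᵐ z ∂ν x, f z = ∫ y, f y ∂ν x := by
  set e := (2 * ‖f‖ + 1)⁻¹
  have he : 2 * |e| * ‖f‖ ≤ 1 := by
    rw [abs_of_pos (by positivity), mul_comm 2, mul_assoc, inv_mul_le_one₀ (by positivity)]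
    linarith
  have he' : 2 * |-e| * ‖f‖ ≤ 1 := by rwa [abs_neg]
  have hmid := hν.2 _ _ (hν.1.perturbation hprob he) (hν.1.perturbation hprob he')
    (ae_of_all _ fun x => (half_perturbation_add_half_perturbation_neg he).symm)
  filter_upwards [hmid] with x hx
  exact ae_eq_integral_of_perturbation_eq he (by positivity) hx

lemma IsExtremeYoungMeasure.exists_measurable_ae_eq_dirac (hext : IsExtremeYoungMeasure μ B ν)
    (hB : IsCompact B) (hBne : B.Nonempty) :
    ∃ u : α → B, Measurable u ∧ ∀ᵐ x ∂μ, ν x = dirac (u x) := by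
  obtain ⟨ν', hν', hprob, hνν'⟩ := hext.1.exists_ae_eq_forall_isProbabilityMeasure hBne
  have : CompactSpace B := isCompact_iff_compactSpace.mp hB
  let coord (i : Fin m) : B →ᵇ ℝ := .mkOfCompact ⟨fun z => (z : Fin m → ℝ) i,
    (continuous_apply i).comp continuous_subtype_val⟩
  let b (x : α) (i : Fin m) : ℝ := ∫ z, coord i z ∂ν' x
  have hconc : ∀ᵐ x ∂μ, ∀ᵐ (z : B) ∂ν' x, (z : Fin m → ℝ) = b x := by
    filter_upwards [ae_all_iff.2 fun i =>
      (hext.congr_ae hν' hνν').ae_ae_eq_integral hprob (coord i)] with x hx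
    filter_upwards [ae_all_iff.2 hx] with z hz using funext hz
  have hbB : ∀ᵐ x ∂μ, b x ∈ B := by
    filter_upwards [hconc] with x hx
    obtain ⟨z, hz⟩ := hx.exists
    exact hz ▸ z.2
  obtain ⟨u, hu, hub⟩ := exists_measurable_subtype_ae_eq hB.measurableSet hBne
    (measurable_pi_lambda _ fun i => hν'.1 (coord i)) hbB
  refine ⟨u, hu, ?_⟩
  filter_upwards [hνν', hconc, hub] with x hνx hx hux
  rw [hνx, eq_dirac_iff_ae_eq]
  filter_upwards [hx] with z hz using Subtype.ext (hz.trans hux.symm)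

lemma isExtremeYoungMeasure_of_ae_eq_dirac (hν : IsYoungMeasure μ B ν) {u : α → B}
    (hu : ∀ᵐ x ∂μ, ν x = dirac (u x)) : IsExtremeYoungMeasure μ B ν := by
  refine ⟨hν, fun ν₁ ν₂ h₁ h₂ hmid => ?_⟩
  filter_upwards [hu, hmid, h₁.2, h₂.2] with x hux hmx _ _
  rw [hux] at hmx
  rw [eq_dirac_of_dirac_eq_half_add hmx,
    eq_dirac_of_dirac_eq_half_add (hmx.trans (add_comm _ _))]

end YoungMeasure

theorem extremeYoungMeasure_iff_dirac_general
    {α : Type*} [MeasurableSpace α] (μ : Measure α)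
    {m : ℕ} (B : Set (Fin m → ℝ)) (hB : IsCompact B) (hBne : B.Nonempty)
    (ν : α → Measure B) (hν : IsYoungMeasure μ B ν) :
    IsExtremeYoungMeasure μ B ν ↔
      ∃ u : α → B, Measurable u ∧ ∀ᵐ x ∂μ, ν x = Measure.dirac (u x) := by
  refine ⟨fun hext => hext.exists_measurable_ae_eq_dirac hB hBne, ?_⟩
  rintro ⟨u, -, hu⟩
  exact isExtremeYoungMeasure_of_ae_eq_dirac hν hu

/-- a Young measure `ν ∈ Y(Ω;B)` is an extreme point of `Y(Ω;B)` if and only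
if it is composed of Dirac measures: `ν_x = δ_{u(x)}` a.e. for some measurable `u : Ω → B`. -/
theorem extremeYoungMeasure_iff_dirac
    {α : Type*} [MeasurableSpace α] (μ : Measure α) [IsFiniteMeasure μ]
    {m : ℕ} (B : Set (Fin m → ℝ)) (hB : IsCompact B) (hBne : B.Nonempty)
    (ν : α → Measure B) (hν : IsYoungMeasure μ B ν) :
    IsExtremeYoungMeasure μ B ν ↔
      ∃ u : α → B, Measurable u ∧ ∀ᵐ x ∂μ, ν x = Measure.dirac (u x) :=
  extremeYoungMeasure_iff_dirac_general μ B hB hBne ν hν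
end

section
/- Let ν ∈ Y(Ω;B) be a Young measure. If there is a measurable set A ⊆ Ω of positive measure and measurable functions u₁ ≠ u₂ (differing on a positive-measure subset of A) with ν_x = ½δ_{u₁(x)} + ½δ_{u₂(x)} for x ∈ A, then ν is not an extreme point of Y(Ω;B). -/
open MeasureTheory
open scoped BoundedContinuousFunction

/-- a Young measure which on a set `A` of positive measure is the two-atomic
mixture `ν_x = ½ δ_{u₁(x)} + ½ δ_{u₂(x)}` with `u₁ ≠ u₂` on a positive-measure subset of `A`
is not an extreme point of `Y(Ω;B)`. -/
theorem not_extreme_of_two_atomic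
    {α : Type*} [MeasurableSpace α] (μ : Measure α) [IsFiniteMeasure μ]
    {m : ℕ} (B : Set (Fin m → ℝ)) (hB : IsCompact B)
    (ν : α → Measure B) (hν : IsYoungMeasure μ B ν)
    (A : Set α) (hA : MeasurableSet A) (hApos : 0 < μ A)
    (u₁ u₂ : α → B) (hu₁ : Measurable u₁) (hu₂ : Measurable u₂)
    (hdiff : 0 < μ {x | x ∈ A ∧ u₁ x ≠ u₂ x})
    (hform : ∀ᵐ x ∂μ, x ∈ A →
      ν x = (2⁻¹ : ENNReal) • Measure.dirac (u₁ x)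
          + (2⁻¹ : ENNReal) • Measure.dirac (u₂ x)) :
    ¬ IsExtremeYoungMeasure μ B ν := by
  classical
  rintro ⟨hY, hext⟩
  set ν₁ : α → Measure B := fun x => if x ∈ A then Measure.dirac (u₁ x) else ν x with hν₁def
  set ν₂ : α → Measure B := fun x => if x ∈ A then Measure.dirac (u₂ x) else ν x with hν₂def
  have hYM : ∀ (u : α → B), Measurable u →
      IsYoungMeasure μ B (fun x => if x ∈ A then Measure.dirac (u x) else ν x) := by
    intro u hu
    constructor
    · intro g
      have : (fun x => ∫ z, g z ∂(if x ∈ A then Measure.dirac (u x) else ν x))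
          = fun x => if x ∈ A then g (u x) else ∫ z, g z ∂(ν x) := by
        funext x
        by_cases hx : x ∈ A <;> simp [hx, integral_dirac]
      rw [this]
      exact Measurable.ite hA ((g.continuous.measurable).comp hu) (hν.1 g)
    · filter_upwards [hν.2] with x hx
      by_cases h : x ∈ A
      · simpa [h] using (Measure.dirac.isProbabilityMeasure (x := u x))
      · simpa [h] using hx
  have h1 := hYM u₁ hu₁
  have h2 := hYM u₂ hu₂
  have hmix : ∀ᵐ x ∂μ, ν x = (2⁻¹ : ENNReal) • ν₁ x + (2⁻¹ : ENNReal) • ν₂ x := by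
    filter_upwards [hform] with x hx
    by_cases h : x ∈ A
    · simpa [hν₁def, hν₂def, h] using hx h
    · simp only [hν₁def, hν₂def, if_neg h]
      rw [← add_smul, ENNReal.inv_two_add_inv_two, one_smul]
  have heq := hext ν₁ ν₂ h1 h2 hmix
  have hsub : {x | x ∈ A ∧ u₁ x ≠ u₂ x} ⊆ {x | ¬ ν₁ x = ν₂ x} := by
    rintro x ⟨hxA, hne⟩
    simp only [hν₁def, hν₂def, if_pos hxA, Set.mem_setOf_eq]
    intro h
    apply hne
    rw [Measure.ext_iff] at h
    have := h {u₂ x} (measurableSet_singleton _)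
    simpa [Measure.dirac_apply' _ (measurableSet_singleton _),
      Set.indicator_apply] using this
  have : μ {x | x ∈ A ∧ u₁ x ≠ u₂ x} = 0 :=
    measure_mono_null hsub heq
  exact absurd this hdiff.ne'
end

section
/- (Lemma 2, completeness part) The ring R = C(Y(Ω;B))|_{S_p} = {v ∈ C(S_p) : ∃ v̄ ∈ C(Y(Ω;B)) with v = v̄ ∘ δ} separates closed sets from points in S_p: for any closed A ⊆ S_p (in the L^p topology) and u₀ ∈ S_p \ A with dist(u₀, A) = ε > 0, the function v(u) = min(ε, ‖u − u₀‖_{L^p}^p) belongs to R. -/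
open MeasureTheory
open scoped BoundedContinuousFunction

/-!
The functional `T ↦ T h` is weak* continuous for every fixed `h ∈ L¹(Ω; C(B))`, so it suffices
to find `h` with `⟨δ u, h⟩ = ‖u - u₀‖_{L^p}^p` for all `u`. Take `h(x, z) = ‖z - u₀(x)‖ ^ p`:
it is continuous in `z`, depends continuously on `u₀(x) ∈ B`, and is bounded since `B` is compact,
hence it is an element of `L¹(Ω; C(B))`. Then `v̄(T) = min(ε, T h)` is the required extension.
-/

theorem continuous_norm_sub_rpow {E : Type*} [SeminormedAddCommGroup E] {p : ℝ} (hp : 0 ≤ p) :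
    Continuous fun q : E × E => ‖q.2 - q.1‖ ^ p :=
  (continuous_snd.sub continuous_fst).norm.rpow_const fun _ => Or.inr hp

noncomputable def ContinuousMap.curryBounded {W K E : Type*} [TopologicalSpace W]
    [TopologicalSpace K] [CompactSpace K] [PseudoMetricSpace E] (k : C(W × K, E)) :
    C(W, K →ᵇ E) :=
  ⟨fun w => ContinuousMap.isometryEquivBoundedOfCompact K E (k.curry w),
    (ContinuousMap.isometryEquivBoundedOfCompact K E).continuous.comp k.curry.continuous⟩

theorem Continuous.integrable_comp_of_compactSpace {α W E : Type*} [MeasurableSpace α]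
    (μ : Measure α) [IsFiniteMeasure μ] [TopologicalSpace W] [CompactSpace W]
    [MeasurableSpace W] [OpensMeasurableSpace W] [TopologicalSpace.PseudoMetrizableSpace W]
    [SecondCountableTopology W] [NormedAddCommGroup E] {g : W → E} (hg : Continuous g)
    {u : α → W} (hu : Measurable u) : Integrable (g ∘ u) μ := by
  obtain ⟨C, hC⟩ := isCompact_univ.exists_bound_of_continuousOn hg.continuousOn
  exact .of_bound (hg.comp_stronglyMeasurable hu.stronglyMeasurable).aestronglyMeasurable C
    (.of_forall fun x => hC (u x) trivial)

theorem MeasureTheory.Integrable.integral_toL1_apply {α K E : Type*} [MeasurableSpace α]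
    {μ : Measure α} [TopologicalSpace K] [NormedAddCommGroup E] [NormedSpace ℝ E]
    {f : α → K →ᵇ E} (hf : Integrable f μ) (u : α → K) :
    ∫ x, hf.toL1 f x (u x) ∂μ = ∫ x, f x (u x) ∂μ :=
  integral_congr_ae <| hf.coeFn_toL1.mono fun x hx => DFunLike.congr_fun hx (u x)

theorem restriction_ring_separates_general
    {α : Type*} [MeasurableSpace α] (μ : Measure α) [IsFiniteMeasure μ]
    {m : ℕ} (B : Set (Fin m → ℝ)) (hB : IsCompact B)
    (p : ℝ) (hp : 1 ≤ p)
    (D : {u : α → B // Measurable u} → WeakDual ℝ (Lp (B →ᵇ ℝ) 1 μ))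
    (hD : ∀ (u : {u : α → B // Measurable u}) (h : Lp (B →ᵇ ℝ) 1 μ),
      D u h = ∫ x, (h x) (u.1 x) ∂μ)
    (A : Set {u : α → B // Measurable u}) (u₀ : {u : α → B // Measurable u})
    (ε : ℝ) (hε : 0 < ε)
    (hdist : ∀ u ∈ A,
      ε ≤ ∫ x, ‖(u.1 x : Fin m → ℝ) - (u₀.1 x : Fin m → ℝ)‖ ^ p ∂μ) :
    ∃ v' : WeakDual ℝ (Lp (B →ᵇ ℝ) 1 μ) → ℝ,
      Continuous v' ∧
      (∀ u : {u : α → B // Measurable u},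
        v' (D u) = min ε (∫ x, ‖(u.1 x : Fin m → ℝ) - (u₀.1 x : Fin m → ℝ)‖ ^ p ∂μ)) ∧
      v' (D u₀) = 0 ∧
      ∀ u ∈ A, v' (D u) = ε := by
  have : CompactSpace B := isCompact_iff_compactSpace.mp hB
  have hp₀ : 0 < p := by linarith
  let cost : C(B × B, ℝ) := ⟨fun q => ‖(q.2 : Fin m → ℝ) - q.1‖ ^ p,
    (continuous_norm_sub_rpow hp₀.le).comp
      (continuous_subtype_val.prodMap continuous_subtype_val)⟩
  have hint := cost.curryBounded.continuous.integrable_comp_of_compactSpace μ u₀.2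
  set h := hint.toL1 _
  have pairing : ∀ u, D u h = ∫ x, ‖(u.1 x : Fin m → ℝ) - (u₀.1 x : Fin m → ℝ)‖ ^ p ∂μ :=
    fun u => by rw [hD, hint.integral_toL1_apply]; rfl
  refine ⟨fun T => min ε (T h), continuous_const.min (WeakDual.eval_continuous h),
    fun u => congrArg (min ε) (pairing u), ?_, fun u hu => ?_⟩
  · simp [pairing, Real.zero_rpow hp₀.ne', hε.le]
  · exact (congrArg (min ε) (pairing u)).trans (min_eq_left (hdist u hu))

/-- Lemma 2, completeness part: the ring `R = C(Y(Ω;B))|_{S_p}` separates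
closed sets from points in `S_p`.  For a set `A ⊆ S_p` at `L^p`-distance (to the `p`-th
power) at least `ε > 0` from `u₀ ∈ S_p`, the function `v(u) = min(ε, ‖u − u₀‖_{L^p}^p)`
belongs to `R`: it admits a weakly* continuous extension `v̄` to the dual
`L¹(Ω;C(B))* ⊇ Y(Ω;B)` satisfying `v = v̄ ∘ δ`, with `v̄(δ u₀) = 0` and `v̄ = ε` on `δ(A)`.
Here `δ = D` is the Dirac embedding `S_p → L¹(Ω;C(B))*`, `⟨D u, h⟩ = ∫_Ω h(x,u(x)) dx`. -/
theorem restriction_ring_separates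
    {α : Type*} [MeasurableSpace α] (μ : Measure α) [IsFiniteMeasure μ]
    {m : ℕ} (B : Set (Fin m → ℝ)) (hB : IsCompact B) (hBne : B.Nonempty)
    (p : ℝ) (hp : 1 ≤ p)
    (D : {u : α → B // Measurable u} → WeakDual ℝ (Lp (B →ᵇ ℝ) 1 μ))
    (hD : ∀ (u : {u : α → B // Measurable u}) (h : Lp (B →ᵇ ℝ) 1 μ),
      D u h = ∫ x, (h x) (u.1 x) ∂μ)
    (A : Set {u : α → B // Measurable u}) (u₀ : {u : α → B // Measurable u})
    (ε : ℝ) (hε : 0 < ε)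
    (hdist : ∀ u ∈ A,
      ε ≤ ∫ x, ‖(u.1 x : Fin m → ℝ) - (u₀.1 x : Fin m → ℝ)‖ ^ p ∂μ) :
    ∃ v' : WeakDual ℝ (Lp (B →ᵇ ℝ) 1 μ) → ℝ,
      Continuous v' ∧
      (∀ u : {u : α → B // Measurable u},
        v' (D u) = min ε (∫ x, ‖(u.1 x : Fin m → ℝ) - (u₀.1 x : Fin m → ℝ)‖ ^ p ∂μ)) ∧
      v' (D u₀) = 0 ∧
      ∀ u ∈ A, v' (D u) = ε :=
  restriction_ring_separates_general μ B hB p hp D hD A u₀ ε hε hdist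
end

section
/- (Filippov–Roxin selection step) Let K be a compact metrizable space, y measurable, and suppose φ : I × K → ℝ and F : I × K → X (X a Banach space) are Carathéodory maps. For ν : I → P(K) weakly* measurable, define α(t) = ∫_K φ(t,s) ν_t(ds) and q(t) = ∫_K F(t,s) ν_t(ds). If for a.e. t the set Q(t) = {(a, F(t,s)) : a ≥ φ(t,s), s ∈ K} is convex and closed and contains (α(t), q(t)), then the multivalued map S(t) = {s ∈ K : φ(t,s) ≤ α(t), F(t,s) = q(t)} is nonempty, closed-valued, and measurable, and hence admits a measurable selection ū : I → K with ū(t) ∈ S(t) for a.e. t. -/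
/-!
Weak* measurability of `ν` makes `t ↦ ∫ χ dν_t` measurable for continuous `χ`; expanding
`F(t,·)` along partitions of unity `(χ_i)` of mesh `→ 0`, the measurable sums
`∑ (∫ χ_i dν_t) • F(t, s_i)` converge to `∫ F(t,·) dν_t` by uniform continuity of `F(t,·)`,
so `α` and `q` are a.e. equal to measurable maps. With these, `S(t)` is the sublevel set
`{h(t,·) ≤ 0}` of the Carathéodory function `h(t,s) = max (φ(t,s) - α(t)) ‖F(t,s) - q(t)‖`,
nonempty a.e. because `(α(t), q(t)) ∈ Q(t)`. Whether such a sublevel set meets a ball is decided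
by countably many conditions `h(t,d) < ε` with `d` in a countable dense set, which is what the
Kuratowski–Ryll-Nardzewski construction needs: choose measurably centres from a dense
sequence within `2⁻ᵏ` of `S(t)`, consecutive ones `2·2⁻ᵏ`-close, and pass to the limit.
-/

open MeasureTheory Filter Topology Metric TopologicalSpace
open scoped BoundedContinuousFunction

section ParametricIntegral

variable {K : Type*} [MetricSpace K] [CompactSpace K]

theorem exists_partitionOfUnity_isSubordinate_ball {r : ℝ} (hr : 0 < r) :
    ∃ A : Finset K, ∃ f : PartitionOfUnity A K, f.IsSubordinate fun a => ball (a : K) r := by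
  obtain ⟨A, hA⟩ := isCompact_univ.elim_finite_subcover (fun x : K => ball x r)
    (fun _ => isOpen_ball) fun x _ => Set.mem_iUnion.2 ⟨x, mem_ball_self hr⟩
  exact ⟨A, PartitionOfUnity.exists_isSubordinate isClosed_univ _ (fun _ => isOpen_ball)
    (by simpa only [Set.iUnion_subtype, Finset.mem_coe] using hA)⟩

variable [MeasurableSpace K] [OpensMeasurableSpace K]
  {Y : Type*} [NormedAddCommGroup Y] [NormedSpace ℝ Y] [CompleteSpace Y]

theorem PartitionOfUnity.dist_sum_integral_smul_le {ι : Type*} [Fintype ι]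
    (f : PartitionOfUnity ι K) (c : ι → K) {g : K → Y} (hg : Continuous g)
    (ν : Measure K) [IsProbabilityMeasure ν] {ε : ℝ}
    (hε : ∀ i s, f i s ≠ 0 → dist (g (c i)) (g s) ≤ ε) :
    dist (∑ i, (∫ s, f i s ∂ν) • g (c i)) (∫ s, g s ∂ν) ≤ ε := by
  have hint : ∀ h : K → Y, Continuous h → Integrable h ν := fun h hh =>
    hh.integrable_of_hasCompactSupport (.of_compactSpace h)
  have hsum : ∫ s, ∑ i, f i s • g (c i) ∂ν = ∑ i, (∫ s, f i s ∂ν) • g (c i) := by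
    rw [integral_finsetSum _ fun i _ => hint (fun s => f i s • g (c i)) (by fun_prop)]
    simp only [integral_smul_const]
  have hpt : ∀ s, ∑ i, f i s • g (c i) ∈ closedBall (g s) ε := fun s => by
    rw [← finsum_eq_sum_of_fintype]
    exact f.finsum_smul_mem_convex (g := fun i _ => g (c i)) (Set.mem_univ s)
      (fun i hi => mem_closedBall.2 (hε i s hi)) (convex_closedBall _ _)
  rw [← hsum, dist_eq_norm, ← integral_sub (hint _ (by fun_prop)) (hint g hg)]
  calc _ ≤ ε * ν.real Set.univ := norm_integral_le_of_norm_le_const <|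
        Eventually.of_forall fun s => by rw [← dist_eq_norm]; exact hpt s
    _ = ε := by simp

theorem aestronglyMeasurable_integral_of_caratheodory {α : Type*} [MeasurableSpace α]
    (G : α → K → Y) (hGm : ∀ s, StronglyMeasurable fun t => G t s)
    (hGc : ∀ t, Continuous (G t)) (ν : α → Measure K)
    (hνw : ∀ g : K →ᵇ ℝ, Measurable fun t => ∫ s, g s ∂ν t)
    (μ : Measure α) (hνp : ∀ᵐ t ∂μ, IsProbabilityMeasure (ν t)) :
    AEStronglyMeasurable (fun t => ∫ s, G t s ∂ν t) μ := by
  choose A f hf using fun n : ℕ =>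
    exists_partitionOfUnity_isSubordinate_ball (K := K) (Nat.one_div_pos_of_nat (n := n))
  have happrox : ∀ n, StronglyMeasurable fun t => ∑ i, (∫ s, f n i s ∂ν t) • G t i := fun n =>
    Finset.stronglyMeasurable_fun_sum _ fun i _ =>
      (hνw (.mkOfCompact (f n i))).stronglyMeasurable.smul (hGm i)
  refine aestronglyMeasurable_of_tendsto_ae atTop (fun n => (happrox n).aestronglyMeasurable) ?_
  filter_upwards [hνp] with t _
  refine Metric.tendsto_atTop.2 fun ε hε => ?_
  obtain ⟨δ, hδ, hG⟩ := Metric.uniformContinuous_iff.1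
    (CompactSpace.uniformContinuous_of_continuous (hGc t)) (ε / 2) (half_pos hε)
  obtain ⟨N, hN⟩ := exists_nat_one_div_lt hδ
  refine ⟨N, fun n hn => ((f n).dist_sum_integral_smul_le _ (hGc t) _ fun i s hi => ?_).trans_lt
    (half_lt_self hε)⟩
  have hsi : dist (i : K) s < 1 / (n + 1 : ℝ) := by
    rw [dist_comm]
    exact hf n i (subset_tsupport _ hi)
  exact (hG (hsi.trans_le ((Nat.one_div_le_one_div hn).trans hN.le))).le

end ParametricIntegral

section MeasurableSelection

variable {α : Type*} [MeasurableSpace α]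

theorem measurableSet_exists_lt_of_isOpen {K : Type*} [TopologicalSpace K] [SeparableSpace K]
    {h : α → K → ℝ} (hm : ∀ s, Measurable fun t => h t s) (hc : ∀ t, Continuous (h t))
    {U : Set K} (hU : IsOpen U) (ε : ℝ) :
    MeasurableSet {t | ∃ s ∈ U, h t s < ε} := by
  obtain ⟨D, hDc, hD⟩ := exists_countable_dense K
  have hunion : {t | ∃ s ∈ U, h t s < ε} = ⋃ d ∈ D ∩ U, {t | h t d < ε} := by
    ext t
    simp only [Set.mem_ofPred_eq, Set.mem_iUnion, Set.mem_inter_iff, exists_prop]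
    constructor
    · rintro ⟨s, hsU, hs⟩
      obtain ⟨d, hdD, hdU, hd⟩ :=
        hD.exists_mem_open (hU.inter (isOpen_lt (hc t) continuous_const)) ⟨s, hsU, hs⟩
      exact ⟨d, ⟨hdD, hdU⟩, hd⟩
    · rintro ⟨d, ⟨-, hdU⟩, hd⟩
      exact ⟨d, hdU, hd⟩
  rw [hunion]
  exact .biUnion (hDc.mono Set.inter_subset_left) fun d _ =>
    measurableSet_lt (hm d) measurable_const

variable {K : Type*} [MetricSpace K]

theorem measurableSet_exists_nonpos_mem_ball [CompactSpace K] {h : α → K → ℝ}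
    (hm : ∀ s, Measurable fun t => h t s) (hc : ∀ t, Continuous (h t)) (x : K) (r : ℝ) :
    MeasurableSet {t | ∃ s ∈ ball x r, h t s ≤ 0} := by
  have hunion : {t | ∃ s ∈ ball x r, h t s ≤ 0} =
      ⋃ q : ℚ, ⋃ (_ : (q : ℝ) < r), ⋂ n : ℕ, {t | ∃ s ∈ ball x q, h t s < 1 / (n + 1)} := by
    ext t
    simp only [Set.mem_ofPred_eq, Set.mem_iUnion, Set.mem_iInter, exists_prop]
    constructor
    · rintro ⟨s, hs, hs0⟩
      obtain ⟨q, hsq, hqr⟩ := exists_rat_btwn (mem_ball.1 hs)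
      exact ⟨q, hqr, fun n => ⟨s, mem_ball.2 hsq, hs0.trans_lt Nat.one_div_pos_of_nat⟩⟩
    · rintro ⟨q, hqr, hq⟩
      -- a minimiser of `h t` on the compact `closedBall x q` lies in `ball x r` and is `≤ 0`
      obtain ⟨s₀, hs₀, -⟩ := hq 0
      obtain ⟨s, hs, hmin⟩ := isClosed_closedBall.isCompact.exists_isMinOn
        ⟨s₀, ball_subset_closedBall hs₀⟩ (hc t).continuousOn
      refine ⟨s, mem_ball.2 ((mem_closedBall.1 hs).trans_lt hqr),
        le_of_forall_pos_lt_add fun ε hε => ?_⟩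
      obtain ⟨n, hn⟩ := exists_nat_one_div_lt hε
      obtain ⟨s', hs', hs'n⟩ := hq n
      calc h t s ≤ h t s' := hmin (ball_subset_closedBall hs')
        _ < 0 + ε := by linarith
  rw [hunion]
  exact .iUnion fun q => .iUnion fun _ => .iInter fun n =>
    measurableSet_exists_lt_of_isOpen hm hc isOpen_ball _

theorem exists_measurable_nat_selection {p : α → ℕ → Prop} (hp : ∀ t, ∃ n, p t n)
    (hm : ∀ n, MeasurableSet {t | p t n}) : ∃ g : α → ℕ, Measurable g ∧ ∀ t, p t (g t) := by
  classical
  exact ⟨_, measurable_find hp hm, fun t => Nat.find_spec (hp t)⟩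

theorem exists_seq_of_forall_exists_succ {β : Type*} {P : ℕ → β → Prop}
    {R : ℕ → β → β → Prop} (h0 : ∃ b, P 0 b) (hs : ∀ k b, P k b → ∃ b', P (k + 1) b' ∧ R k b b') :
    ∃ f : ℕ → β, ∀ k, P k (f k) ∧ R k (f k) (f (k + 1)) := by
  obtain ⟨b₀, hb₀⟩ := h0
  choose! next hnextP hnextR using hs
  let f : ℕ → β := fun k => Nat.rec b₀ next k
  have hf : ∀ k, P k (f k) := fun k => Nat.rec hb₀ (fun k ih => hnextP k _ ih) k
  exact ⟨f, fun k => ⟨hf k, hnextR k _ (hf k)⟩⟩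

theorem exists_measurable_selection [CompleteSpace K] [SeparableSpace K] [Nonempty K]
    [MeasurableSpace K] [BorelSpace K] (Z : α → Set K) (hZc : ∀ t, IsClosed (Z t))
    (hZne : ∀ t, (Z t).Nonempty) (hZm : ∀ x r, MeasurableSet {t | (Z t ∩ ball x r).Nonempty}) :
    ∃ u : α → K, Measurable u ∧ ∀ t, u t ∈ Z t := by
  set c := denseSeq K
  have hc : ∀ x (r : ℝ), 0 < r → ∃ n, dist x (c n) < r := fun x r hr =>
    denseRange_iff.1 (denseRange_denseSeq K) x r hr
  let IsApprox : ℕ → (α → ℕ) → Prop := fun k g =>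
    Measurable g ∧ ∀ t, (Z t ∩ ball (c (g t)) ((1 / 2) ^ k)).Nonempty
  have hinit : ∃ g, IsApprox 0 g := by
    refine exists_measurable_nat_selection (fun t => ?_) fun n => hZm _ _
    obtain ⟨s, hs⟩ := hZne t
    obtain ⟨n, hn⟩ := hc s _ one_pos
    exact ⟨n, s, hs, mem_ball.2 hn⟩
  have hstep : ∀ k g, IsApprox k g →
      ∃ g', IsApprox (k + 1) g' ∧ ∀ t, dist (c (g t)) (c (g' t)) ≤ 2 * (1 / 2) ^ k := by
    rintro k g ⟨hg, hgZ⟩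
    have hnext : ∀ t, ∃ n, (Z t ∩ ball (c n) ((1 / 2) ^ (k + 1))).Nonempty ∧
        dist (c (g t)) (c n) ≤ 2 * (1 / 2) ^ k := fun t => by
      obtain ⟨s, hsZ, hs⟩ := hgZ t
      obtain ⟨n, hn⟩ := hc s _ (pow_pos one_half_pos (k + 1))
      refine ⟨n, ⟨s, hsZ, mem_ball.2 hn⟩, ?_⟩
      calc dist (c (g t)) (c n) ≤ dist (c (g t)) s + dist s (c n) := dist_triangle _ _ _
        _ ≤ (1 / 2) ^ k + (1 / 2) ^ (k + 1) := add_le_add (mem_ball'.1 hs).le hn.le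
        _ ≤ 2 * (1 / 2) ^ k := by rw [pow_succ]; linarith [pow_pos (one_half_pos (α := ℝ)) k]
    obtain ⟨g', hg', hg'Z⟩ := exists_measurable_nat_selection hnext fun n => (hZm _ _).inter
      (hg (Set.to_countable {m | dist (c m) (c n) ≤ 2 * (1 / 2) ^ k}).measurableSet)
    exact ⟨g', ⟨hg', fun t => (hg'Z t).1⟩, fun t => (hg'Z t).2⟩
  obtain ⟨g, hg⟩ := exists_seq_of_forall_exists_succ hinit hstep
  choose u hu using fun t => cauchySeq_tendsto_of_complete <|
    cauchySeq_of_le_geometric (1 / 2) 2 (by norm_num) fun k => (hg k).2 t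
  refine ⟨u, measurable_of_tendsto_metrizable (fun k => measurable_from_top.comp (hg k).1.1)
    (tendsto_pi_nhds.2 hu), fun t => ?_⟩
  choose s hsZ hs using fun k => (hg k).1.2 t
  have hsu : Tendsto s atTop (𝓝 (u t)) := (hu t).congr_dist <|
    squeeze_zero (fun _ => dist_nonneg) (fun k => (mem_ball'.1 (hs k)).le)
      (tendsto_pow_atTop_nhds_zero_of_lt_one (by norm_num) (by norm_num))
  exact (hZc t).mem_of_tendsto hsu (Eventually.of_forall hsZ)

variable [CompactSpace K] [Nonempty K] [MeasurableSpace K] [BorelSpace K]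

theorem exists_measurable_forall_nonpos_of_caratheodory {h : α → K → ℝ}
    (hm : ∀ s, Measurable fun t => h t s) (hc : ∀ t, Continuous (h t))
    (hne : ∀ t, ∃ s, h t s ≤ 0) : ∃ u : α → K, Measurable u ∧ ∀ t, h t (u t) ≤ 0 :=
  exists_measurable_selection (fun t => {s | h t s ≤ 0})
    (fun t => isClosed_le (hc t) continuous_const) hne fun x r => by
      simpa only [Set.Nonempty, Set.mem_inter_iff, Set.mem_ofPred_eq, and_comm, exists_prop]
        using measurableSet_exists_nonpos_mem_ball hm hc x r

theorem exists_measurable_ae_nonpos_of_caratheodory {h : α → K → ℝ}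
    (hm : ∀ s, Measurable fun t => h t s) (hc : ∀ t, Continuous (h t))
    (μ : Measure α) (hne : ∀ᵐ t ∂μ, ∃ s, h t s ≤ 0) :
    ∃ u : α → K, Measurable u ∧ ∀ᵐ t ∂μ, h t (u t) ≤ 0 := by
  obtain ⟨E, hEae, hEm, hE⟩ := hne.exists_measurable_mem
  obtain ⟨u, hum, hu⟩ := exists_measurable_forall_nonpos_of_caratheodory
    (h := fun t s => E.indicator (h · s) t) (fun s => (hm s).indicator hEm)
    (fun t => by by_cases ht : t ∈ E <;> simp [ht, hc t, continuous_const])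
    (fun t => by by_cases ht : t ∈ E <;> simp [ht, hE t])
  refine ⟨u, hum, ?_⟩
  filter_upwards [hEae] with t ht
  simpa [Set.indicator_of_mem ht] using hu t

end MeasurableSelection

theorem filippov_roxin_selection_general
    (T₀ : ℝ)
    {K : Type*} [TopologicalSpace K] [CompactSpace K]
    [TopologicalSpace.MetrizableSpace K] [MeasurableSpace K] [BorelSpace K]
    [Nonempty K]
    {X : Type*} [NormedAddCommGroup X] [NormedSpace ℝ X] [CompleteSpace X]
    (φ : ℝ → K → ℝ) (hφm : ∀ s, Measurable fun t => φ t s) (hφc : ∀ t, Continuous (φ t))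
    (F : ℝ → K → X) (hFm : ∀ s, StronglyMeasurable fun t => F t s)
    (hFc : ∀ t, Continuous (F t))
    (ν : ℝ → Measure K)
    (hνw : ∀ g : K →ᵇ ℝ, Measurable fun t => ∫ s, g s ∂(ν t))
    (hνp : ∀ᵐ t ∂(volume.restrict (Set.Icc 0 T₀)), IsProbabilityMeasure (ν t))
    (hQ : ∀ᵐ t ∂(volume.restrict (Set.Icc 0 T₀)),
      Convex ℝ {q : ℝ × X | ∃ s : K, φ t s ≤ q.1 ∧ q.2 = F t s} ∧
      IsClosed {q : ℝ × X | ∃ s : K, φ t s ≤ q.1 ∧ q.2 = F t s} ∧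
      (∫ s, φ t s ∂(ν t), ∫ s, F t s ∂(ν t)) ∈
        {q : ℝ × X | ∃ s : K, φ t s ≤ q.1 ∧ q.2 = F t s}) :
    (∀ᵐ t ∂(volume.restrict (Set.Icc 0 T₀)),
        {s : K | φ t s ≤ (∫ s', φ t s' ∂(ν t)) ∧ F t s = ∫ s', F t s' ∂(ν t)}.Nonempty) ∧
    (∀ t : ℝ, IsClosed
        {s : K | φ t s ≤ (∫ s', φ t s' ∂(ν t)) ∧ F t s = ∫ s', F t s' ∂(ν t)}) ∧
    ∃ u : ℝ → K, Measurable u ∧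
      ∀ᵐ t ∂(volume.restrict (Set.Icc 0 T₀)),
        u t ∈ {s : K | φ t s ≤ (∫ s', φ t s' ∂(ν t)) ∧ F t s = ∫ s', F t s' ∂(ν t)} := by
  let _ : MetricSpace K := metrizableSpaceMetric K
  obtain ⟨α, hαm, hα⟩ := aestronglyMeasurable_integral_of_caratheodory φ
    (fun s => (hφm s).stronglyMeasurable) hφc ν hνw _ hνp
  obtain ⟨q, hqm, hq⟩ := aestronglyMeasurable_integral_of_caratheodory F hFm hFc ν hνw _ hνp
  have hne : ∀ᵐ t ∂(volume.restrict (Set.Icc 0 T₀)),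
      ∃ s, max (φ t s - α t) (dist (F t s) (q t)) ≤ 0 := by
    filter_upwards [hQ, hα, hq] with t ⟨_, _, s, hs, hsF⟩ hαt hqt
    exact ⟨s, max_le (by rwa [sub_nonpos, ← hαt]) (by rw [← hqt, hsF, dist_self])⟩
  obtain ⟨u, hum, hu⟩ := exists_measurable_ae_nonpos_of_caratheodory
    (h := fun t s => max (φ t s - α t) (dist (F t s) (q t))) (fun s => ((hφm s).sub hαm.measurable).max ((hFm s).dist hqm).measurable)
    (fun t => by fun_prop) _ hne
  refine ⟨?_, fun t => (isClosed_le (hφc t) continuous_const).inter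
    (isClosed_eq (hFc t) continuous_const), u, hum, ?_⟩
  · filter_upwards [hQ] with t ⟨_, _, s, hs, hsF⟩
    exact ⟨s, hs, hsF.symm⟩
  · filter_upwards [hu, hα, hq] with t ht hαt hqt
    rwa [max_le_iff, sub_nonpos, dist_le_zero, ← hαt, ← hqt] at ht

/-- Filippov–Roxin selection step: on `I = [0,T]` with Lebesgue measure, let
`K` be compact metrizable, `X` a Banach space, `φ : I × K → ℝ` and `F : I × K → X`
Carathéodory maps, and `ν : I → P(K)` weakly* measurable.  Put `α(t) = ∫_K φ(t,·) dν_t` and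
`q(t) = ∫_K F(t,·) dν_t`.  If for a.e. `t` the orientor set
`Q(t) = {(a,F(t,s)) : a ≥ φ(t,s), s ∈ K}` is convex, closed, and contains `(α(t),q(t))`,
then the multivalued map `S(t) = {s ∈ K : φ(t,s) ≤ α(t), F(t,s) = q(t)}` has nonempty
(a.e.) closed values and admits a measurable selection `ū` with `ū(t) ∈ S(t)` a.e. -/
theorem filippov_roxin_selection
    (T₀ : ℝ) (hT₀ : 0 < T₀)
    {K : Type*} [TopologicalSpace K] [CompactSpace K]
    [TopologicalSpace.MetrizableSpace K] [MeasurableSpace K] [BorelSpace K]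
    [Nonempty K]
    {X : Type*} [NormedAddCommGroup X] [NormedSpace ℝ X] [CompleteSpace X]
    (φ : ℝ → K → ℝ) (hφm : ∀ s, Measurable fun t => φ t s) (hφc : ∀ t, Continuous (φ t))
    (F : ℝ → K → X) (hFm : ∀ s, StronglyMeasurable fun t => F t s)
    (hFc : ∀ t, Continuous (F t))
    (ν : ℝ → Measure K)
    (hνw : ∀ g : K →ᵇ ℝ, Measurable fun t => ∫ s, g s ∂(ν t))
    (hνp : ∀ᵐ t ∂(volume.restrict (Set.Icc 0 T₀)), IsProbabilityMeasure (ν t))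
    (hQ : ∀ᵐ t ∂(volume.restrict (Set.Icc 0 T₀)),
      Convex ℝ {q : ℝ × X | ∃ s : K, φ t s ≤ q.1 ∧ q.2 = F t s} ∧
      IsClosed {q : ℝ × X | ∃ s : K, φ t s ≤ q.1 ∧ q.2 = F t s} ∧
      (∫ s, φ t s ∂(ν t), ∫ s, F t s ∂(ν t)) ∈
        {q : ℝ × X | ∃ s : K, φ t s ≤ q.1 ∧ q.2 = F t s}) :
    (∀ᵐ t ∂(volume.restrict (Set.Icc 0 T₀)),
        {s : K | φ t s ≤ (∫ s', φ t s' ∂(ν t)) ∧ F t s = ∫ s', F t s' ∂(ν t)}.Nonempty) ∧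
    (∀ t : ℝ, IsClosed
        {s : K | φ t s ≤ (∫ s', φ t s' ∂(ν t)) ∧ F t s = ∫ s', F t s' ∂(ν t)}) ∧
    ∃ u : ℝ → K, Measurable u ∧
      ∀ᵐ t ∂(volume.restrict (Set.Icc 0 T₀)),
        u t ∈ {s : K | φ t s ≤ (∫ s', φ t s' ∂(ν t)) ∧ F t s = ∫ s', F t s' ∂(ν t)} :=
  filippov_roxin_selection_general T₀ φ hφm hφc F hFm hFc ν hνw hνp hQ
end
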